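/- arXiv:0907.2954 — 2 statements merged into one kernel-verified Lean document; each statement's English description precedes it below -/
import Mathlib

section
/- A finite simplicial complex K is a minimal complex if and only if the square nerve N²(K) is simplicially isomorphic to K. -/
/- Theory of strong homotopy types of finite simplicial complexes
   (Barmak–Minian), basic definitions. -/

open Classical

namespace StrongHomotopy

/-- A finite abstract simplicial complex with vertices from the ambient type `V`:
a finite family of nonempty finite subsets of `V`, closed under nonempty subsets.
(All singletons of vertices actually used are faces, by downward closure.) -/
structure Cplx (V : Type) where
  faces : Finset (Finset V)
  nonempty_of_mem : ∀ ⦃σ : Finset V⦄, σ ∈ faces → σ.Nonempty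
  down_closed : ∀ ⦃σ τ : Finset V⦄, σ ∈ faces → τ ⊆ σ → τ.Nonempty → τ ∈ faces

variable {V W : Type}

/-- `v` is a vertex of `K`. -/
def IsVertex (K : Cplx V) (v : V) : Prop := {v} ∈ K.faces

noncomputable section

/-- The set of faces of the link of `v` in `K`. -/
def link (K : Cplx V) (v : V) : Finset (Finset V) :=
  K.faces.filter fun σ => v ∉ σ ∧ insert v σ ∈ K.faces

/-- A family of faces is a simplicial cone with apex `a`. -/
def IsConeWithApex (F : Finset (Finset V)) (a : V) : Prop :=
  {a} ∈ F ∧ ∀ σ ∈ F, insert a σ ∈ F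

/-- A family of faces is a simplicial cone. -/
def IsCone (F : Finset (Finset V)) : Prop := ∃ a, IsConeWithApex F a

/-- `v` is dominated by `v'` in `K`: the link of `v` is a cone with apex `v'`. -/
def DominatedBy (K : Cplx V) (v v' : V) : Prop := IsConeWithApex (link K v) v'

/-- `v` is a dominated vertex of `K`: its link is a simplicial cone. -/
def Dominated (K : Cplx V) (v : V) : Prop := IsCone (link K v)

/-- Deletion `K ∖ v`: the full subcomplex spanned by the vertices other than `v`. -/
def delete (K : Cplx V) (v : V) : Cplx V where
  faces := K.faces.filter fun σ => v ∉ σ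
  nonempty_of_mem := fun σ h => K.nonempty_of_mem (Finset.mem_filter.mp h).1
  down_closed := by
    intro σ τ hσ hsub hne
    rw [Finset.mem_filter] at hσ ⊢
    exact ⟨K.down_closed hσ.1 hsub hne, fun hv => hσ.2 (hsub hv)⟩

/-- The link of a vertex, as a simplicial complex. -/
def linkCplx (K : Cplx V) (v : V) : Cplx V where
  faces := link K v
  nonempty_of_mem := fun σ h => K.nonempty_of_mem (Finset.mem_filter.mp h).1
  down_closed := by
    intro σ τ hσ hsub hne
    simp only [link, Finset.mem_filter] at hσ ⊢
    refine ⟨K.down_closed hσ.1 hsub hne, fun hv => hσ.2.1 (hsub hv), ?_⟩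
    exact K.down_closed hσ.2.2 (Finset.insert_subset_insert v hsub)
      ⟨v, Finset.mem_insert_self v τ⟩

/-- Elementary strong collapse: deletion of a dominated vertex. -/
def ElemStrongCollapse (K L : Cplx V) : Prop := ∃ v, Dominated K v ∧ L = delete K v

/-- `K` strong collapses to `L` (a sequence of elementary strong collapses). -/
def StrongCollapses : Cplx V → Cplx V → Prop := Relation.ReflTransGen ElemStrongCollapse

/-- The complex with a single vertex `v`. -/
def pt (v : V) : Cplx V where
  faces := {{v}}
  nonempty_of_mem := by
    intro σ h
    rw [Finset.mem_singleton] at h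
    subst h
    exact ⟨v, Finset.mem_singleton_self v⟩
  down_closed := by
    intro σ τ hσ hsub hne
    rw [Finset.mem_singleton] at hσ ⊢
    subst hσ
    rcases Finset.subset_singleton_iff.mp hsub with h | h
    · exact absurd h (Finset.nonempty_iff_ne_empty.mp hne)
    · exact h

/-- `K` is strong collapsible: it strong collapses to a single vertex. -/
def StrongCollapsible (K : Cplx V) : Prop := ∃ v, StrongCollapses K (pt v)

/-- A minimal complex: no dominated vertices. -/
def MinimalCplx (K : Cplx V) : Prop := ∀ v, ¬ Dominated K v

/-- A vertex map is simplicial if it sends faces to faces. -/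
def IsSimplicial (K : Cplx V) (L : Cplx W) (f : V → W) : Prop :=
  ∀ σ ∈ K.faces, σ.image f ∈ L.faces

/-- Two vertex maps are contiguous. -/
def Contiguous (K : Cplx V) (L : Cplx W) (f g : V → W) : Prop :=
  ∀ σ ∈ K.faces, σ.image f ∪ σ.image g ∈ L.faces

/-- `f` and `g` lie in the same contiguity class: they are joined by
a finite chain of (pairwise contiguous) maps. -/
def ContigClass (K : Cplx V) (L : Cplx W) : (V → W) → (V → W) → Prop :=
  Relation.ReflTransGen (Contiguous K L)

/-- A strong equivalence of simplicial complexes. -/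
def StrongEquiv (K : Cplx V) (L : Cplx W) (f : V → W) : Prop :=
  IsSimplicial K L f ∧ ∃ g : W → V, IsSimplicial L K g ∧
    ContigClass K K (g ∘ f) id ∧ ContigClass L L (f ∘ g) id

/-- `f` is a simplicial isomorphism from `K` to `L`: a simplicial map,
injective on vertices, inducing a bijection on faces. -/
def IsIsoMap (K : Cplx V) (L : Cplx W) (f : V → W) : Prop :=
  IsSimplicial K L f ∧ Set.InjOn f {v | IsVertex K v} ∧
    K.faces.image (fun σ => σ.image f) = L.faces

/-- `K` and `L` are simplicially isomorphic. -/
def Isomorphic (K : Cplx V) (L : Cplx W) : Prop := ∃ f, IsIsoMap K L f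

/-- `L` is a subcomplex of `K`. -/
def Subcplx (L K : Cplx V) : Prop := L.faces ⊆ K.faces

/-- `L` is a full subcomplex of `K`. -/
def IsFullSub (L K : Cplx V) : Prop :=
  L.faces ⊆ K.faces ∧ ∀ σ ∈ K.faces, (∀ v ∈ σ, IsVertex L v) → σ ∈ L.faces

/-- `K₀` is a core of `K`: a minimal complex to which `K` strong collapses. -/
def IsCore (K K₀ : Cplx V) : Prop := MinimalCplx K₀ ∧ StrongCollapses K K₀

/-- Same strong homotopy type: joined by a finite sequence of strong collapses,
strong expansions and simplicial isomorphisms. (In the abstract setting, where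
new vertices may be created freely, isomorphisms are generated by collapses and
expansions; over a fixed ambient vertex type they must be added as moves.) -/
def SameSHT (K L : Cplx V) : Prop :=
  Relation.ReflTransGen
    (fun A B => ElemStrongCollapse A B ∨ ElemStrongCollapse B A ∨ Isomorphic A B) K L

/-- `K` is vertex-homogeneous: its automorphism group acts transitively on vertices. -/
def VertexHomog (K : Cplx V) : Prop :=
  ∀ v w, IsVertex K v → IsVertex K w → ∃ φ : V → V, IsIsoMap K K φ ∧ φ v = w

/-! ### The nerve -/

/-- The maximal faces of `K`. -/
def maxFaces (K : Cplx V) : Finset (Finset V) :=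
  K.faces.filter fun σ => ∀ τ ∈ K.faces, σ ⊆ τ → σ = τ

/-- The nerve of `K`: vertices are the maximal simplices of `K`; a nonempty set
of maximal simplices is a face iff the simplices have a common vertex. -/
def nerve (K : Cplx V) : Cplx (Finset V) where
  faces := (maxFaces K).powerset.filter fun S => S.Nonempty ∧ ∃ v, ∀ σ ∈ S, v ∈ σ
  nonempty_of_mem := fun S h => (Finset.mem_filter.mp h).2.1
  down_closed := by
    intro S T hS hsub hne
    rw [Finset.mem_filter, Finset.mem_powerset] at hS ⊢
    obtain ⟨hpow, -, v, hv⟩ := hS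
    exact ⟨hsub.trans hpow, hne, v, fun σ hσ => hv σ (hsub hσ)⟩

/-- Iterated ambient vertex types for iterated nerves. -/
def iterV (V : Type) : ℕ → Type := fun n => Nat.rec V (fun _ T => Finset T) n

/-- The iterated nerve `Nⁿ(K)` (with `N⁰(K) = K`). -/
def iterNerve (K : Cplx V) : (n : ℕ) → Cplx (iterV V n)
  | 0 => K
  | n + 1 => nerve (iterNerve K n)

/-- A complex consists of a single vertex. -/
def IsPoint (K : Cplx V) : Prop := ∃ v, K.faces = {{v}}

/-! ### Joins -/

/-- The left part of a set of vertices of `V ⊕ W`. -/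
def lefts (ρ : Finset (V ⊕ W)) : Finset V :=
  ρ.preimage Sum.inl Sum.inl_injective.injOn

/-- The right part of a set of vertices of `V ⊕ W`. -/
def rights (ρ : Finset (V ⊕ W)) : Finset W :=
  ρ.preimage Sum.inr Sum.inr_injective.injOn

lemma lefts_union_rights (ρ : Finset (V ⊕ W)) :
    (lefts ρ).image Sum.inl ∪ (rights ρ).image Sum.inr = ρ := by
  ext x
  cases x with
  | inl v => simp [lefts, rights]
  | inr w => simp [lefts, rights]

lemma lefts_eq (σ : Finset V) (τ : Finset W) :
    lefts (σ.image Sum.inl ∪ τ.image Sum.inr) = σ := by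
  ext v; simp [lefts]

lemma rights_eq (σ : Finset V) (τ : Finset W) :
    rights (σ.image Sum.inl ∪ τ.image Sum.inr) = τ := by
  ext w; simp [rights]

/-- The faces of the join `K * L`. -/
def joinFaces (K : Cplx V) (L : Cplx W) : Finset (Finset (V ⊕ W)) :=
  (((insert ∅ K.faces) ×ˢ (insert ∅ L.faces)).image
    (fun p => p.1.image Sum.inl ∪ p.2.image Sum.inr)).erase ∅

lemma mem_joinFaces {K : Cplx V} {L : Cplx W} {ρ : Finset (V ⊕ W)} :
    ρ ∈ joinFaces K L ↔
      ρ.Nonempty ∧ lefts ρ ∈ insert ∅ K.faces ∧ rights ρ ∈ insert ∅ L.faces := by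
  unfold joinFaces
  constructor
  · intro h
    have hne : ρ ≠ ∅ := Finset.ne_of_mem_erase h
    have h' := Finset.mem_of_mem_erase h
    rw [Finset.mem_image] at h'
    obtain ⟨p, hp, hρ⟩ := h'
    rw [Finset.mem_product] at hp
    subst hρ
    rw [lefts_eq, rights_eq]
    exact ⟨Finset.nonempty_iff_ne_empty.mpr hne, hp.1, hp.2⟩
  · rintro ⟨hne, hl, hr⟩
    apply Finset.mem_erase.mpr
    refine ⟨Finset.nonempty_iff_ne_empty.mp hne, ?_⟩
    rw [Finset.mem_image]
    exact ⟨(lefts ρ, rights ρ), Finset.mem_product.mpr ⟨hl, hr⟩, lefts_union_rights ρ⟩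

/-- The simplicial join `K * L` of complexes with disjoint vertex sets
(realized on the disjoint sum of the ambient types). -/
def join (K : Cplx V) (L : Cplx W) : Cplx (V ⊕ W) where
  faces := joinFaces K L
  nonempty_of_mem := fun ρ h => (mem_joinFaces.mp h).1
  down_closed := by
    intro ρ ρ' hρ hsub hne
    obtain ⟨-, hl, hr⟩ := mem_joinFaces.mp hρ
    apply mem_joinFaces.mpr
    refine ⟨hne, ?_, ?_⟩
    · rcases Finset.eq_empty_or_nonempty (lefts ρ') with h0 | h1
      · rw [h0]; exact Finset.mem_insert_self _ _
      · have hsubl : lefts ρ' ⊆ lefts ρ := by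
          intro v hv
          simp only [lefts, Finset.mem_preimage] at hv ⊢
          exact hsub hv
        have hKf : lefts ρ ∈ K.faces := by
          rcases Finset.mem_insert.mp hl with h | h
          · obtain ⟨v, hv⟩ := h1
            exact absurd (hsubl hv) (by simp [h])
          · exact h
        exact Finset.mem_insert.mpr (Or.inr (K.down_closed hKf hsubl h1))
    · rcases Finset.eq_empty_or_nonempty (rights ρ') with h0 | h1
      · rw [h0]; exact Finset.mem_insert_self _ _
      · have hsubr : rights ρ' ⊆ rights ρ := by
          intro w hw
          simp only [rights, Finset.mem_preimage] at hw ⊢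
          exact hsub hw
        have hLf : rights ρ ∈ L.faces := by
          rcases Finset.mem_insert.mp hr with h | h
          · obtain ⟨w, hw⟩ := h1
            exact absurd (hsubr hw) (by simp [h])
          · exact h
        exact Finset.mem_insert.mpr (Or.inr (L.down_closed hLf hsubr h1))

/-! ### Finite posets (finite T₀-spaces) -/

variable {P : Type} [PartialOrder P]

/-- `x` is a beat point of the finite poset `X`: the points of `X` strictly below
`x` have a maximum, or the points of `X` strictly above `x` have a minimum. -/
def BeatPoint (X : Finset P) (x : P) : Prop :=
  x ∈ X ∧ ((∃ y ∈ X, y < x ∧ ∀ z ∈ X, z < x → z ≤ y) ∨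
    (∃ y ∈ X, x < y ∧ ∀ z ∈ X, x < z → y ≤ z))

/-- Elementary strong collapse of finite posets: removal of a beat point. -/
def ElemPosetStrongCollapse (X Y : Finset P) : Prop :=
  ∃ x, BeatPoint X x ∧ Y = X.erase x

/-- Strong collapse of finite posets: successive removal of beat points. -/
def PosetStrongCollapses : Finset P → Finset P → Prop :=
  Relation.ReflTransGen ElemPosetStrongCollapse

/-- A finite poset is contractible iff it strong collapses to a point (Stong). -/
def PosetContractible (X : Finset P) : Prop := ∃ x, PosetStrongCollapses X {x}

/-- The link `Ĉ_x` of `x` in `X`: the points of `X` comparable with `x` and distinct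
from it. -/
def posetLink (X : Finset P) (x : P) : Finset P :=
  X.filter fun y => y < x ∨ x < y

/-- `x` is a weak point of `X`: its link is contractible. -/
def WeakPoint (X : Finset P) (x : P) : Prop :=
  x ∈ X ∧ PosetContractible (posetLink X x)

/-- Collapse of finite posets: successive removal of weak points. -/
def PosetCollapses : Finset P → Finset P → Prop :=
  Relation.ReflTransGen (fun X Y => ∃ x, WeakPoint X x ∧ Y = X.erase x)

/-- A finite poset is collapsible if it collapses to a point. -/
def PosetCollapsible (X : Finset P) : Prop := ∃ x, PosetCollapses X {x}

/-- The order complex of a finite poset: faces are the nonempty chains. -/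
def orderCplx (X : Finset P) : Cplx P where
  faces := X.powerset.filter fun σ => σ.Nonempty ∧ IsChain (· ≤ ·) (σ : Set P)
  nonempty_of_mem := fun σ h => (Finset.mem_filter.mp h).2.1
  down_closed := by
    intro σ τ hσ hsub hne
    rw [Finset.mem_filter, Finset.mem_powerset] at hσ ⊢
    exact ⟨hsub.trans hσ.1, hne, hσ.2.2.mono (Finset.coe_subset.mpr hsub)⟩

/-- The barycentric subdivision of a complex: the order complex of its poset of
faces (the face poset, ordered by inclusion). -/
def sd (K : Cplx V) : Cplx (Finset V) := orderCplx K.faces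

/-- Homotopy of order-preserving maps between finite posets: being joined by a
fence in the pointwise order. -/
def PosetHomotopic {X Y : Type} [Preorder X] [Preorder Y] (f g : X →o Y) : Prop :=
  Relation.ReflTransGen (fun p q : X →o Y => p ≤ q ∨ q ≤ p) f g

/-- Homotopy equivalence of finite posets. -/
def PosetHomotopyEquiv (X Y : Type) [Preorder X] [Preorder Y] : Prop :=
  ∃ (f : X →o Y) (g : Y →o X),
    PosetHomotopic (g.comp f) OrderHom.id ∧ PosetHomotopic (f.comp g) OrderHom.id

/-! ### Classical collapses and n-collapses -/

/-- Elementary (classical) simplicial collapse: removal of a free face `σ`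
together with the unique face `τ` properly containing it. -/
def ElemCollapse (K L : Cplx V) : Prop :=
  ∃ σ τ : Finset V, σ ∈ K.faces ∧ τ ∈ K.faces ∧ σ ⊂ τ ∧
    (∀ ρ ∈ K.faces, σ ⊂ ρ → ρ = τ) ∧ L.faces = K.faces \ {σ, τ}

/-- Classical simplicial collapse. -/
def Collapses : Cplx V → Cplx V → Prop := Relation.ReflTransGen ElemCollapse

/-- A complex is collapsible if it collapses to a point. -/
def Collapsible (K : Cplx V) : Prop := ∃ v, Collapses K (pt v)

/-- `n`-collapses: a `0`-collapse is a strong collapse; an `(n+1)`-collapse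
successively deletes vertices whose links are `n`-collapsible. -/
def NCollapses : ℕ → Cplx V → Cplx V → Prop
  | 0 => StrongCollapses
  | n + 1 => Relation.ReflTransGen
      (fun K L => ∃ v, (∃ w, NCollapses n (linkCplx K v) (pt w)) ∧ L = delete K v)

/-- `K` is `n`-collapsible: it `n`-collapses to a single vertex. -/
def NCollapsible (n : ℕ) (K : Cplx V) : Prop := ∃ v, NCollapses n K (pt v)

/-- `K` is non-evasive: it is `n`-collapsible for some `n`. -/
def NonEvasive (K : Cplx V) : Prop := ∃ n, NCollapsible n K

end

/-! ### Auxiliary lemmas for Statement 8 -/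

noncomputable section Stmt8Aux

lemma maxFaces_subset (K : Cplx V) : maxFaces K ⊆ K.faces := Finset.filter_subset _ _

lemma mem_maxFaces {K : Cplx V} {σ : Finset V} :
    σ ∈ maxFaces K ↔ σ ∈ K.faces ∧ ∀ τ ∈ K.faces, σ ⊆ τ → σ = τ := Finset.mem_filter

lemma exists_maxFace (K : Cplx V) {τ : Finset V} (hτ : τ ∈ K.faces) :
    ∃ σ ∈ maxFaces K, τ ⊆ σ := by
  classical
  obtain ⟨m, hm, hmax⟩ : ∃ m ∈ (K.faces.filter fun σ => τ ⊆ σ),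
      ∀ x ∈ (K.faces.filter fun σ => τ ⊆ σ), ¬ m < x := by
    obtain ⟨m, hm⟩ := Finset.exists_maximal (s := K.faces.filter fun σ => τ ⊆ σ)
      ⟨τ, Finset.mem_filter.mpr ⟨hτ, Finset.Subset.refl τ⟩⟩
    exact ⟨m, hm.prop, fun x hx hlt => lt_irrefl m (lt_of_lt_of_le hlt (hm.le_of_ge hx hlt.le))⟩
  rw [Finset.mem_filter] at hm
  refine ⟨m, mem_maxFaces.mpr ⟨hm.1, ?_⟩, hm.2⟩
  intro ρ hρ hmρ
  by_contra hne
  exact hmax ρ (Finset.mem_filter.mpr ⟨hρ, hm.2.trans hmρ⟩)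
    (Finset.ssubset_iff_subset_ne.mpr ⟨hmρ, hne⟩)

lemma mem_nerve {K : Cplx V} {S : Finset (Finset V)} :
    S ∈ (nerve K).faces ↔ S ⊆ maxFaces K ∧ S.Nonempty ∧ ∃ v, ∀ σ ∈ S, v ∈ σ := by
  simp only [nerve, Finset.mem_filter, Finset.mem_powerset, and_assoc]

lemma isVertex_iff {K : Cplx V} {v : V} : IsVertex K v ↔ ∃ σ ∈ K.faces, v ∈ σ := by
  constructor
  · intro h; exact ⟨{v}, h, Finset.mem_singleton_self v⟩
  · rintro ⟨σ, hσ, hv⟩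
    exact K.down_closed hσ (Finset.singleton_subset_iff.mpr hv) ⟨v, Finset.mem_singleton_self v⟩

/-- The family of maximal faces of `K` containing `v`. -/
def Mv (K : Cplx V) (v : V) : Finset (Finset V) :=
  (maxFaces K).filter fun σ => v ∈ σ

lemma Mv_mem_nerve {K : Cplx V} {v : V} (hv : IsVertex K v) :
    Mv K v ∈ (nerve K).faces := by
  obtain ⟨σ, hσ, hsub⟩ := exists_maxFace K hv
  refine mem_nerve.mpr ⟨Finset.filter_subset _ _,
    ⟨σ, Finset.mem_filter.mpr ⟨hσ, hsub (Finset.mem_singleton_self v)⟩⟩, v, ?_⟩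
  intro τ hτ; exact (Finset.mem_filter.mp hτ).2

lemma ne_of_dominatedBy {K : Cplx V} {v w : V} (h : DominatedBy K v w) : v ≠ w := by
  have h1 := h.1
  rw [link, Finset.mem_filter] at h1
  intro he
  exact h1.2.1 (he ▸ Finset.mem_singleton_self w)

lemma vertex_of_dominatedBy {K : Cplx V} {v w : V} (h : DominatedBy K v w) :
    IsVertex K v := by
  have h1 := h.1
  rw [link, Finset.mem_filter] at h1
  exact isVertex_iff.mpr ⟨insert v {w}, h1.2.2, Finset.mem_insert_self v {w}⟩

lemma vertex_of_dominatedBy' {K : Cplx V} {v w : V} (h : DominatedBy K v w) :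
    IsVertex K w := by
  have h1 := h.1
  rw [link, Finset.mem_filter] at h1
  exact isVertex_iff.mpr ⟨{w}, h1.1, Finset.mem_singleton_self w⟩

lemma dominatedBy_of_forall {K : Cplx V} {v w : V} (hvw : v ≠ w) (hv : IsVertex K v)
    (h : ∀ σ ∈ maxFaces K, v ∈ σ → w ∈ σ) : DominatedBy K v w := by
  constructor
  · obtain ⟨σ, hσ, hsub⟩ := exists_maxFace K hv
    have hvσ : v ∈ σ := hsub (Finset.mem_singleton_self v)
    have hwσ : w ∈ σ := h σ hσ hvσ
    refine Finset.mem_filter.mpr ⟨?_, ?_, ?_⟩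
    · exact K.down_closed (maxFaces_subset K hσ)
        (Finset.singleton_subset_iff.mpr hwσ) ⟨w, Finset.mem_singleton_self w⟩
    · simp [hvw]
    · refine K.down_closed (maxFaces_subset K hσ) ?_ ⟨v, Finset.mem_insert_self _ _⟩
      exact Finset.insert_subset hvσ (Finset.singleton_subset_iff.mpr hwσ)
  · intro σ hσ
    rw [link, Finset.mem_filter] at hσ
    obtain ⟨hσf, hvσ, hins⟩ := hσ
    obtain ⟨τ, hτ, hsub⟩ := exists_maxFace K hins
    have hvτ : v ∈ τ := hsub (Finset.mem_insert_self v σ)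
    have hwτ : w ∈ τ := h τ hτ hvτ
    have hστ : σ ⊆ τ := (Finset.subset_insert v σ).trans hsub
    refine Finset.mem_filter.mpr ⟨?_, ?_, ?_⟩
    · exact K.down_closed (maxFaces_subset K hτ)
        (Finset.insert_subset hwτ hστ) ⟨w, Finset.mem_insert_self _ _⟩
    · simp only [Finset.mem_insert]
      rintro (rfl | hc)
      · exact hvw rfl
      · exact hvσ hc
    · refine K.down_closed (maxFaces_subset K hτ) ?_ ⟨v, Finset.mem_insert_self _ _⟩
      exact Finset.insert_subset hvτ (Finset.insert_subset hwτ hστ)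

lemma forall_of_dominatedBy {K : Cplx V} {v w : V} (h : DominatedBy K v w) :
    ∀ σ ∈ maxFaces K, v ∈ σ → w ∈ σ := by
  intro σ hσ hvσ
  obtain ⟨hw, hcone⟩ := h
  classical
  rcases Finset.eq_empty_or_nonempty (σ.erase v) with he | hne
  · have hσv : σ = {v} := by
      rcases (Finset.erase_eq_empty_iff σ v).mp he with h0 | h1
      · exact absurd (h0 ▸ hvσ) (Finset.notMem_empty v)
      · exact h1
    rw [link, Finset.mem_filter] at hw
    have heq := (mem_maxFaces.mp hσ).2 _ hw.2.2
      (by rw [hσv]; exact Finset.singleton_subset_iff.mpr (Finset.mem_insert_self v {w}))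
    rw [heq]
    exact Finset.mem_insert_of_mem (Finset.mem_singleton_self w)
  · have hσ' : σ.erase v ∈ link K v := by
      refine Finset.mem_filter.mpr ⟨K.down_closed (maxFaces_subset K hσ)
        (Finset.erase_subset v σ) hne, Finset.notMem_erase v σ, ?_⟩
      rw [Finset.insert_erase hvσ]
      exact maxFaces_subset K hσ
    have h2 := hcone _ hσ'
    rw [link, Finset.mem_filter] at h2
    have hins : insert v (insert w (σ.erase v)) ∈ K.faces := h2.2.2
    have hsub : σ ⊆ insert v (insert w (σ.erase v)) := by
      intro x hx
      rcases eq_or_ne x v with rfl | hxv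
      · exact Finset.mem_insert_self _ _
      · exact Finset.mem_insert_of_mem
          (Finset.mem_insert_of_mem (Finset.mem_erase.mpr ⟨hxv, hx⟩))
    have heq := (mem_maxFaces.mp hσ).2 _ hins hsub
    rw [heq]
    exact Finset.mem_insert_of_mem (Finset.mem_insert_self _ _)

/-- A maximal face of the nerve with common point `v` equals `Mv K v`. -/
lemma maxnerve_eq_Mv {K : Cplx V} {S : Finset (Finset V)} (hS : S ∈ maxFaces (nerve K))
    {v : V} (hv : ∀ σ ∈ S, v ∈ σ) : S = Mv K v := by
  have hSf := (mem_maxFaces.mp hS).1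
  obtain ⟨hsub, hne, -⟩ := mem_nerve.mp hSf
  have hvV : IsVertex K v := by
    obtain ⟨σ, hσ⟩ := hne
    exact isVertex_iff.mpr ⟨σ, maxFaces_subset K (hsub hσ), hv σ hσ⟩
  have hSM : S ⊆ Mv K v := fun σ hσ => Finset.mem_filter.mpr ⟨hsub hσ, hv σ hσ⟩
  exact (mem_maxFaces.mp hS).2 _ (Mv_mem_nerve hvV) hSM

lemma common_unique {K : Cplx V} (hmin : MinimalCplx K) {S : Finset (Finset V)}
    (hS : S ∈ maxFaces (nerve K)) {v w : V} (hv : ∀ σ ∈ S, v ∈ σ) (hw : ∀ σ ∈ S, w ∈ σ) :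
    v = w := by
  by_contra hne
  have h1 : S = Mv K v := maxnerve_eq_Mv hS hv
  have hvV : IsVertex K v := by
    obtain ⟨-, hne', -⟩ := mem_nerve.mp (mem_maxFaces.mp hS).1
    obtain ⟨σ, hσ⟩ := hne'
    exact isVertex_iff.mpr ⟨σ, maxFaces_subset K
      ((mem_nerve.mp (mem_maxFaces.mp hS).1).1 hσ), hv σ hσ⟩
  exact hmin v ⟨w, dominatedBy_of_forall hne hvV
    (fun σ hσ hvs => hw σ (h1 ▸ Finset.mem_filter.mpr ⟨hσ, hvs⟩))⟩

lemma Mv_maxFace {K : Cplx V} (hmin : MinimalCplx K) {v : V} (hv : IsVertex K v) :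
    Mv K v ∈ maxFaces (nerve K) := by
  refine mem_maxFaces.mpr ⟨Mv_mem_nerve hv, ?_⟩
  intro T hT hsub
  obtain ⟨hTsub, hTne, w, hw⟩ := mem_nerve.mp hT
  have hvw : v = w := by
    by_contra hne
    refine hmin v ⟨w, dominatedBy_of_forall hne hv ?_⟩
    intro σ hσ hvs
    exact hw σ (hsub (Finset.mem_filter.mpr ⟨hσ, hvs⟩))
  refine Finset.Subset.antisymm hsub ?_
  intro σ hσ
  exact Finset.mem_filter.mpr ⟨hTsub hσ, hvw ▸ hw σ hσ⟩

/-- Pick a common point of a family of faces (with a default). -/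
def nervePt (d : V) (S : Finset (Finset V)) : V :=
  if h : ∃ v, ∀ σ ∈ S, v ∈ σ then h.choose else d

lemma nervePt_common {d : V} {S : Finset (Finset V)}
    (h : ∃ v, ∀ σ ∈ S, v ∈ σ) : ∀ σ ∈ S, nervePt d S ∈ σ := by
  rw [nervePt, dif_pos h]; exact h.choose_spec

lemma vertex_nerve2_iff {K : Cplx V} {S : Finset (Finset V)} :
    IsVertex (nerve (nerve K)) S ↔ S ∈ maxFaces (nerve K) := by
  constructor
  · intro h
    exact (mem_nerve.mp h).1 (Finset.mem_singleton_self S)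
  · intro h
    have hSf := (mem_maxFaces.mp h).1
    obtain ⟨-, hne, -⟩ := mem_nerve.mp hSf
    refine mem_nerve.mpr ⟨Finset.singleton_subset_iff.mpr h, ⟨S, Finset.mem_singleton_self S⟩, ?_⟩
    obtain ⟨σ, hσ⟩ := hne
    exact ⟨σ, fun T hT => (Finset.mem_singleton.mp hT) ▸ hσ⟩

/-- The vertex set of a complex, as a finset. -/
def vtx {A : Type} (K : Cplx A) : Finset A := K.faces.biUnion id

lemma mem_vtx {A : Type} {K : Cplx A} {a : A} : a ∈ vtx K ↔ IsVertex K a := by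
  rw [vtx, Finset.mem_biUnion]
  exact ⟨fun ⟨σ, hσ, ha⟩ => isVertex_iff.mpr ⟨σ, hσ, ha⟩,
    fun h => by obtain ⟨σ, hσ, ha⟩ := isVertex_iff.mp h; exact ⟨σ, hσ, ha⟩⟩

theorem minimal_imp_iso {K : Cplx V} (hK : K.faces.Nonempty) (hmin : MinimalCplx K) :
    Isomorphic (nerve (nerve K)) K := by
  obtain ⟨τ0, hτ0⟩ := hK
  obtain ⟨d, -⟩ := K.nonempty_of_mem hτ0
  have hface_common : ∀ {S : Finset (Finset V)}, S ∈ maxFaces (nerve K) →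
      ∃ v, ∀ σ ∈ S, v ∈ σ := fun hS => (mem_nerve.mp (mem_maxFaces.mp hS).1).2.2
  have hMvPt : ∀ {v : V}, IsVertex K v → nervePt d (Mv K v) = v := by
    intro v hv
    have hex : ∃ u, ∀ σ ∈ Mv K v, u ∈ σ :=
      ⟨v, fun σ hσ => (Finset.mem_filter.mp hσ).2⟩
    exact common_unique hmin (Mv_maxFace hmin hv) (nervePt_common hex)
      (fun σ hσ => (Finset.mem_filter.mp hσ).2)
  have hsimp : IsSimplicial (nerve (nerve K)) K (nervePt d) := by
    intro 𝒮 h𝒮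
    obtain ⟨hsub, hne, σ0, hσ0⟩ := mem_nerve.mp h𝒮
    have hσ0K : σ0 ∈ K.faces := by
      obtain ⟨T, hT⟩ := hne
      have hTf := (mem_maxFaces.mp (hsub hT)).1
      exact maxFaces_subset K ((mem_nerve.mp hTf).1 (hσ0 T hT))
    refine K.down_closed hσ0K ?_ (hne.image _)
    intro u hu
    obtain ⟨T, hT, rfl⟩ := Finset.mem_image.mp hu
    exact nervePt_common (hface_common (hsub hT)) σ0 (hσ0 T hT)
  refine ⟨nervePt d, hsimp, ?_, ?_⟩
  · intro S hS S' hS' heq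
    have hS1 : S ∈ maxFaces (nerve K) := vertex_nerve2_iff.mp hS
    have hS1' : S' ∈ maxFaces (nerve K) := vertex_nerve2_iff.mp hS'
    have e1 : S = Mv K (nervePt d S) :=
      maxnerve_eq_Mv hS1 (nervePt_common (hface_common hS1))
    have e2 : S' = Mv K (nervePt d S') :=
      maxnerve_eq_Mv hS1' (nervePt_common (hface_common hS1'))
    rw [e1, e2, heq]
  · apply Finset.Subset.antisymm
    · intro τ hτ
      obtain ⟨𝒮, h𝒮, rfl⟩ := Finset.mem_image.mp hτ
      exact hsimp 𝒮 h𝒮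
    · intro τ hτ
      classical
      have hvτ : ∀ v ∈ τ, IsVertex K v := fun v hv => isVertex_iff.mpr ⟨τ, hτ, hv⟩
      refine Finset.mem_image.mpr ⟨τ.image (fun v => Mv K v), ?_, ?_⟩
      · obtain ⟨σ0, hσ0, hτσ0⟩ := exists_maxFace K hτ
        refine mem_nerve.mpr ⟨?_, (K.nonempty_of_mem hτ).image _, σ0, ?_⟩
        · intro S hS
          obtain ⟨v, hv, rfl⟩ := Finset.mem_image.mp hS
          exact Mv_maxFace hmin (hvτ v hv)
        · intro S hS
          obtain ⟨v, hv, rfl⟩ := Finset.mem_image.mp hS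
          exact Finset.mem_filter.mpr ⟨hσ0, hτσ0 hv⟩
      · rw [Finset.image_image]
        calc τ.image (fun v => nervePt d (Mv K v)) = τ.image id :=
              Finset.image_congr (fun v hv => hMvPt (hvτ v hv))
          _ = τ := Finset.image_id

theorem iso_imp_minimal {K : Cplx V} (hK : K.faces.Nonempty)
    (hiso : Isomorphic (nerve (nerve K)) K) : MinimalCplx K := by
  classical
  rintro v ⟨w, hdom⟩
  obtain ⟨τ0, hτ0⟩ := hK
  obtain ⟨d, -⟩ := K.nonempty_of_mem hτ0
  obtain ⟨f, hsimp, hinj, himg⟩ := hiso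
  set L := nerve (nerve K) with hL
  have hvw : v ≠ w := ne_of_dominatedBy hdom
  have hvV : IsVertex K v := vertex_of_dominatedBy hdom
  have hwV : IsVertex K w := vertex_of_dominatedBy' hdom
  have hdomf : ∀ σ ∈ maxFaces K, v ∈ σ → w ∈ σ := forall_of_dominatedBy hdom
  have hface_common : ∀ {S : Finset (Finset V)}, S ∈ maxFaces (nerve K) →
      ∃ u, ∀ σ ∈ S, u ∈ σ := fun hS => (mem_nerve.mp (mem_maxFaces.mp hS).1).2.2
  -- the vertex set of L is the set of maximal faces of the nerve
  have hvtxL : vtx L = maxFaces (nerve K) := by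
    ext S
    rw [mem_vtx, hL, vertex_nerve2_iff]
  -- cardinality equality from the isomorphism
  have himage : (vtx L).image f = vtx K := by
    apply Finset.Subset.antisymm
    · intro u hu
      obtain ⟨S, hS, rfl⟩ := Finset.mem_image.mp hu
      have : ({S} : Finset (Finset (Finset V))).image f ∈ K.faces :=
        hsimp _ (mem_vtx.mp hS)
      rw [Finset.image_singleton] at this
      exact mem_vtx.mpr this
    · intro u hu
      have : ({u} : Finset V) ∈ K.faces := mem_vtx.mp hu
      rw [← himg] at this
      obtain ⟨𝒮, h𝒮, himg2⟩ := Finset.mem_image.mp this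
      obtain ⟨S, hS⟩ := L.nonempty_of_mem h𝒮
      have hfS : f S = u := by
        have : f S ∈ ({u} : Finset V) := himg2 ▸ Finset.mem_image_of_mem f hS
        exact Finset.mem_singleton.mp this
      have hSv : IsVertex L S :=
        L.down_closed h𝒮 (Finset.singleton_subset_iff.mpr hS) ⟨S, Finset.mem_singleton_self S⟩
      exact Finset.mem_image.mpr ⟨S, mem_vtx.mpr hSv, hfS⟩
  have hcard : (vtx L).card = (vtx K).card := by
    rw [← himage]
    exact (Finset.card_image_of_injOn (hinj.mono (fun S hS => mem_vtx.mp hS))).symm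
  -- the strict injection
  set g : Finset (Finset V) → V :=
    fun S => if ∀ σ ∈ S, v ∈ σ then w else nervePt d S with hg
  have hgmem : ∀ S ∈ maxFaces (nerve K), g S ∈ (vtx K).erase v := by
    intro S hS
    simp only [hg]
    by_cases h : ∀ σ ∈ S, v ∈ σ
    · rw [if_pos h]
      exact Finset.mem_erase.mpr ⟨Ne.symm hvw, mem_vtx.mpr hwV⟩
    · rw [if_neg h]
      have hcom := nervePt_common (d := d) (hface_common hS)
      refine Finset.mem_erase.mpr ⟨?_, ?_⟩
      · intro he
        exact h (fun σ hσ => he ▸ hcom σ hσ)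
      · obtain ⟨-, hne, -⟩ := mem_nerve.mp (mem_maxFaces.mp hS).1
        obtain ⟨σ, hσ⟩ := hne
        exact mem_vtx.mpr (isVertex_iff.mpr ⟨σ, maxFaces_subset K
          ((mem_nerve.mp (mem_maxFaces.mp hS).1).1 hσ), hcom σ hσ⟩)
  have hMvw_nerve : Mv K w ∈ (nerve K).faces := Mv_mem_nerve hwV
  have key : ∀ S ∈ maxFaces (nerve K), (∀ σ ∈ S, v ∈ σ) → S = Mv K w := by
    intro S hS h
    have hSMw : S ⊆ Mv K w := by
      intro σ hσ
      have hσm : σ ∈ maxFaces K := (mem_nerve.mp (mem_maxFaces.mp hS).1).1 hσ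
      exact Finset.mem_filter.mpr ⟨hσm, hdomf σ hσm (h σ hσ)⟩
    exact (mem_maxFaces.mp hS).2 _ hMvw_nerve hSMw
  have hginj : Set.InjOn g ↑(maxFaces (nerve K)) := by
    intro S hS S' hS' heq
    rw [Finset.mem_coe] at hS hS'
    simp only [hg] at heq
    by_cases h : ∀ σ ∈ S, v ∈ σ <;> by_cases h' : ∀ σ ∈ S', v ∈ σ
    · exact (key S hS h).trans (key S' hS' h').symm
    · rw [if_pos h, if_neg h'] at heq
      have e1 : S = Mv K w := key S hS h
      have e2 : S' = Mv K (nervePt d S') :=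
        maxnerve_eq_Mv hS' (nervePt_common (hface_common hS'))
      rw [e1, e2, ← heq]
    · rw [if_neg h, if_pos h'] at heq
      have e1 : S' = Mv K w := key S' hS' h'
      have e2 : S = Mv K (nervePt d S) :=
        maxnerve_eq_Mv hS (nervePt_common (hface_common hS))
      rw [e1, e2, heq]
    · rw [if_neg h, if_neg h'] at heq
      have e1 : S = Mv K (nervePt d S) :=
        maxnerve_eq_Mv hS (nervePt_common (hface_common hS))
      have e2 : S' = Mv K (nervePt d S') :=
        maxnerve_eq_Mv hS' (nervePt_common (hface_common hS'))
      rw [e1, e2, heq]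
  have hle : (maxFaces (nerve K)).card ≤ ((vtx K).erase v).card :=
    Finset.card_le_card_of_injOn g hgmem hginj
  have hvmem : v ∈ vtx K := mem_vtx.mpr hvV
  rw [Finset.card_erase_of_mem hvmem] at hle
  have hpos : 0 < (vtx K).card := Finset.card_pos.mpr ⟨v, hvmem⟩
  rw [hvtxL] at hcard
  omega

end Stmt8Aux

/-- `K` is minimal iff `N²(K)` is isomorphic to `K`. -/
theorem stmt8 {V : Type} (K : Cplx V) (hK : K.faces.Nonempty) :
    MinimalCplx K ↔ Isomorphic (nerve (nerve K)) K :=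
  ⟨fun hmin => minimal_imp_iso hK hmin, fun hiso => iso_imp_minimal hK hiso⟩

end StrongHomotopy
end

section
/- (a) If X is a finite poset and Y ⊆ X is a subposet such that X strong collapses to Y (by removing beat points), then the order complex K(X) strong collapses to the order complex K(Y). (b) If K is a finite simplicial complex and L ⊆ K is a subcomplex such that K strong collapses to L (by removing dominated vertices), then the face poset X(K) strong collapses to the face poset X(L). -/
/- Theory of strong homotopy types of finite simplicial complexes
   (Barmak–Minian), basic definitions. -/

open Classical

namespace StrongHomotopy

variable {V W : Type}

/-! ### Auxiliary lemmas for Statement 10 -/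

lemma Cplx.ext' {K L : Cplx V} (h : K.faces = L.faces) : K = L := by
  cases K; cases L; cases h; rfl

section PartA

variable {P : Type} [PartialOrder P]

lemma orderCplx_elem {X Y : Finset P} (h : ElemPosetStrongCollapse X Y) :
    ElemStrongCollapse (orderCplx X) (orderCplx Y) := by
  obtain ⟨x, ⟨hxX, hbeat⟩, rfl⟩ := h
  -- extract a comparable point `y` dominating the link of `x`
  have key : ∃ y ∈ X, (y < x ∨ x < y) ∧
      ∀ z ∈ X, (z < x ∨ x < z) → (z ≤ y ∨ y ≤ z) := by
    rcases hbeat with ⟨y, hyX, hyx, hmax⟩ | ⟨y, hyX, hxy, hmin⟩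
    · refine ⟨y, hyX, Or.inl hyx, ?_⟩
      rintro z hz (hlt | hgt)
      · exact Or.inl (hmax z hz hlt)
      · exact Or.inr (le_of_lt (lt_trans hyx hgt))
    · refine ⟨y, hyX, Or.inr hxy, ?_⟩
      rintro z hz (hlt | hgt)
      · exact Or.inl (le_of_lt (lt_trans hlt hxy))
      · exact Or.inr (hmin z hz hgt)
  obtain ⟨y, hyX, hyx, hkey⟩ := key
  have hyne : y ≠ x := by
    rcases hyx with h | h
    · exact ne_of_lt h
    · exact ne_of_gt h
  refine ⟨x, ⟨y, ?_, ?_⟩, ?_⟩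
  · -- {y} is in the link of x
    simp only [link, orderCplx, Finset.mem_filter, Finset.mem_powerset]
    refine ⟨⟨Finset.singleton_subset_iff.mpr hyX, Finset.singleton_nonempty y, ?_⟩,
      by simp [Ne.symm hyne], ?_, ?_, ?_⟩
    · simp [Set.Subsingleton.isChain, Set.subsingleton_singleton]
    · intro w hw
      rcases Finset.mem_insert.mp hw with rfl | hw
      · exact hxX
      · rw [Finset.mem_singleton] at hw; subst hw; exact hyX
    · exact ⟨x, Finset.mem_insert_self _ _⟩
    · simp only [Finset.coe_insert, Finset.coe_singleton]
      rintro a ha b hb hab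
      rcases ha with rfl | ha <;> rcases hb with rfl | hb
      · exact absurd rfl hab
      · rw [Set.mem_singleton_iff] at hb; subst hb
        rcases hyx with h | h
        · exact Or.inr h.le
        · exact Or.inl h.le
      · rw [Set.mem_singleton_iff] at ha; subst ha
        rcases hyx with h | h
        · exact Or.inl h.le
        · exact Or.inr h.le
      · rw [Set.mem_singleton_iff] at ha hb; subst ha; subst hb
        exact absurd rfl hab
  · -- cone condition: insert y keeps us in the link
    intro σ hσ
    simp only [link, orderCplx, Finset.mem_filter, Finset.mem_powerset] at hσ ⊢
    obtain ⟨⟨hσX, hσne, hσch⟩, hxσ, hins⟩ := hσ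
    obtain ⟨hinsX, -, hinsch⟩ := hins
    -- every element of σ is comparable with x
    have hcmp : ∀ z ∈ σ, z < x ∨ x < z := by
      intro z hz
      have hzx : z ≠ x := fun h => hxσ (h ▸ hz)
      have := hinsch (Finset.mem_coe.mpr (Finset.mem_insert_self x σ))
        (by simp [hz]) (Ne.symm hzx)
      rcases this with h | h
      · exact Or.inr (lt_of_le_of_ne h (Ne.symm hzx))
      · exact Or.inl (lt_of_le_of_ne h hzx)
    have hcmpy : ∀ z ∈ σ, z ≤ y ∨ y ≤ z := fun z hz =>
      hkey z (hσX hz) (hcmp z hz)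
    have hch1 : IsChain (· ≤ ·) (↑(insert y σ) : Set P) := by
      rw [Finset.coe_insert]
      exact hσch.insert (fun z hz _ => (hcmpy z hz).symm)
    refine ⟨⟨Finset.insert_subset hyX hσX, ⟨y, Finset.mem_insert_self _ _⟩, hch1⟩,
      ?_, ?_, ?_, ?_⟩
    · intro hx
      rcases Finset.mem_insert.mp hx with h | h
      · exact hyne h.symm
      · exact hxσ h
    · intro w hw
      rcases Finset.mem_insert.mp hw with rfl | hw
      · exact hxX
      · rcases Finset.mem_insert.mp hw with rfl | hw
        · exact hyX
        · exact hσX hw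
    · exact ⟨x, Finset.mem_insert_self _ _⟩
    · rw [Finset.coe_insert]
      refine hch1.insert ?_
      intro z hz _
      rw [Finset.coe_insert] at hz
      rcases hz with rfl | hz
      · rcases hyx with h | h
        · exact Or.inr h.le
        · exact Or.inl h.le
      · rcases hcmp z hz with h | h
        · exact Or.inr h.le
        · exact Or.inl h.le
  · -- deletion of x equals the order complex of X.erase x
    apply Cplx.ext'
    ext σ
    simp only [delete, orderCplx, Finset.mem_filter, Finset.mem_powerset,
      Finset.subset_erase]
    tauto

lemma partA {X Y : Finset P} (h : PosetStrongCollapses X Y) :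
    StrongCollapses (orderCplx X) (orderCplx Y) := by
  induction h with
  | refl => exact Relation.ReflTransGen.refl
  | tail _ hbc ih => exact ih.tail (orderCplx_elem hbc)

end PartA

section PartB

lemma dom_ne {K : Cplx V} {v v' : V} (h : DominatedBy K v v') : v ≠ v' := by
  have h1 := h.1
  simp only [link, Finset.mem_filter, Finset.mem_singleton] at h1
  exact fun hvv => h1.2.1 hvv

lemma dom_insert {K : Cplx V} {v v' : V} (h : DominatedBy K v v')
    {σ : Finset V} (hσ : σ ∈ K.faces) (hv : v ∈ σ) : insert v' σ ∈ K.faces := by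
  obtain ⟨h1, h2⟩ := h
  rcases Finset.eq_empty_or_nonempty (σ.erase v) with he | hne
  · have hσv : σ = {v} := by
      rcases (Finset.erase_eq_empty_iff σ v).mp he with h | h
      · exact absurd hv (by simp [h])
      · exact h
    subst hσv
    simp only [link, Finset.mem_filter] at h1
    have := h1.2.2
    have heq : insert v ({v'} : Finset V) = insert v' ({v} : Finset V) := by
      ext w; simp [or_comm]
    rwa [heq] at this
  · have hτ : σ.erase v ∈ K.faces :=
      K.down_closed hσ (Finset.erase_subset v σ) hne
    have hlink : σ.erase v ∈ link K v := by
      simp only [link, Finset.mem_filter]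
      exact ⟨hτ, Finset.notMem_erase v σ, by rw [Finset.insert_erase hv]; exact hσ⟩
    have := h2 _ hlink
    simp only [link, Finset.mem_filter] at this
    have h3 := this.2.2
    rw [Finset.insert_comm, Finset.insert_erase hv] at h3
    exact h3

lemma stage1 {K : Cplx V} {v v' : V} (h : DominatedBy K v v') :
    ∀ (n : ℕ) (T : Finset (Finset V)), T.card = n →
      T ⊆ K.faces.filter (fun σ => v ∈ σ ∧ v' ∉ σ) →
      PosetStrongCollapses
        (K.faces.filter (fun σ => ¬(v ∈ σ ∧ v' ∉ σ)) ∪ T)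
        (K.faces.filter (fun σ => ¬(v ∈ σ ∧ v' ∉ σ))) := by
  intro n
  induction n with
  | zero =>
    intro T hcard _
    rw [Finset.card_eq_zero.mp hcard, Finset.union_empty]
    exact Relation.ReflTransGen.refl
  | succ n ih =>
    intro T hcard hT
    have hne : T.Nonempty := by
      rw [← Finset.card_pos, hcard]; omega
    obtain ⟨σ, hσT, hmax⟩ := T.exists_max_image Finset.card hne
    have hσA := Finset.mem_filter.mp (hT hσT)
    have hσK := hσA.1
    have hvσ := hσA.2.1
    have hv'σ := hσA.2.2
    have hins : insert v' σ ∈ K.faces := dom_insert h hσK hvσ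
    refine Relation.ReflTransGen.head ⟨σ, ⟨?_, Or.inr ⟨insert v' σ, ?_, ?_, ?_⟩⟩, ?_⟩
      (ih (T.erase σ) (by rw [Finset.card_erase_of_mem hσT, hcard]; rfl)
        ((T.erase_subset σ).trans hT))
    · exact Finset.mem_union_right _ hσT
    · -- insert v' σ is in the remaining poset
      refine Finset.mem_union_left _ (Finset.mem_filter.mpr ⟨hins, ?_⟩)
      simp
    · -- σ < insert v' σ
      exact Finset.ssubset_insert hv'σ
    · -- minimality
      intro z hz hσz
      have hσz' : σ ⊂ z := hσz
      have hzT : z ∉ T := by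
        intro hzT
        have := hmax z hzT
        have := Finset.card_lt_card hσz'
        omega
      have hzb : z ∈ K.faces.filter (fun σ => ¬(v ∈ σ ∧ v' ∉ σ)) := by
        rcases Finset.mem_union.mp hz with h' | h'
        · exact h'
        · exact absurd h' hzT
      have hz' := Finset.mem_filter.mp hzb
      have hvz : v ∈ z := hσz'.1 hvσ
      have hv'z : v' ∈ z := by
        by_contra hc
        exact hz'.2 ⟨hvz, hc⟩
      exact Finset.insert_subset hv'z hσz'.1
    · -- erase equation
      ext τ
      by_cases hτσ : τ = σ
      · subst hτσ
        simp only [Finset.mem_erase, Finset.mem_union, Finset.mem_filter]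
        constructor
        · rintro (h' | h')
          · exact absurd ⟨hvσ, hv'σ⟩ h'.2
          · exact absurd rfl h'.1
        · rintro ⟨hne', -⟩; exact absurd rfl hne'
      · simp [Finset.mem_erase, Finset.mem_union, hτσ]

lemma stage2 {K : Cplx V} {v v' : V} (h : DominatedBy K v v') :
    ∀ (n : ℕ) (T : Finset (Finset V)), T.card = n →
      T ⊆ K.faces.filter (fun σ => v ∈ σ ∧ v' ∈ σ) →
      PosetStrongCollapses
        (K.faces.filter (fun σ => v ∉ σ) ∪ T)
        (K.faces.filter (fun σ => v ∉ σ)) := by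
  intro n
  induction n with
  | zero =>
    intro T hcard _
    rw [Finset.card_eq_zero.mp hcard, Finset.union_empty]
    exact Relation.ReflTransGen.refl
  | succ n ih =>
    intro T hcard hT
    have hne : T.Nonempty := by
      rw [← Finset.card_pos, hcard]; omega
    obtain ⟨σ, hσT, hmin⟩ := T.exists_min_image Finset.card hne
    have hσA := Finset.mem_filter.mp (hT hσT)
    have hσK := hσA.1
    have hvσ := hσA.2.1
    have hv'σ := hσA.2.2
    have hv'v : v' ∈ σ.erase v :=
      Finset.mem_erase.mpr ⟨(dom_ne h).symm, hv'σ⟩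
    have herne : (σ.erase v).Nonempty := ⟨v', hv'v⟩
    have herK : σ.erase v ∈ K.faces :=
      K.down_closed hσK (Finset.erase_subset v σ) herne
    refine Relation.ReflTransGen.head ⟨σ, ⟨?_, Or.inl ⟨σ.erase v, ?_, ?_, ?_⟩⟩, ?_⟩
      (ih (T.erase σ) (by rw [Finset.card_erase_of_mem hσT, hcard]; rfl)
        ((T.erase_subset σ).trans hT))
    · exact Finset.mem_union_right _ hσT
    · exact Finset.mem_union_left _
        (Finset.mem_filter.mpr ⟨herK, Finset.notMem_erase v σ⟩)
    · exact Finset.erase_ssubset hvσ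
    · intro z hz hzσ
      have hzσ' : z ⊂ σ := hzσ
      have hzT : z ∉ T := by
        intro hzT
        have := hmin z hzT
        have := Finset.card_lt_card hzσ'
        omega
      have hzb : z ∈ K.faces.filter (fun σ => v ∉ σ) := by
        rcases Finset.mem_union.mp hz with h' | h'
        · exact h'
        · exact absurd h' hzT
      have hvz : v ∉ z := (Finset.mem_filter.mp hzb).2
      exact (Finset.subset_erase).mpr ⟨hzσ'.1, hvz⟩
    · ext τ
      by_cases hτσ : τ = σ
      · subst hτσ
        simp only [Finset.mem_erase, Finset.mem_union, Finset.mem_filter]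
        constructor
        · rintro (h' | h')
          · exact absurd hvσ h'.2
          · exact absurd rfl h'.1
        · rintro ⟨hne', -⟩; exact absurd rfl hne'
      · simp [Finset.mem_erase, Finset.mem_union, hτσ]

lemma partB_elem {K L : Cplx V} (h : ElemStrongCollapse K L) :
    PosetStrongCollapses K.faces L.faces := by
  obtain ⟨v, ⟨v', hdom⟩, rfl⟩ := h
  have h1 : K.faces =
      K.faces.filter (fun σ => ¬(v ∈ σ ∧ v' ∉ σ)) ∪
        K.faces.filter (fun σ => v ∈ σ ∧ v' ∉ σ) := by
    ext τ
    simp only [Finset.mem_union, Finset.mem_filter]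
    tauto
  have h2 : K.faces.filter (fun σ => ¬(v ∈ σ ∧ v' ∉ σ)) =
      K.faces.filter (fun σ => v ∉ σ) ∪
        K.faces.filter (fun σ => v ∈ σ ∧ v' ∈ σ) := by
    ext τ
    simp only [Finset.mem_union, Finset.mem_filter]
    tauto
  have hc1 := stage1 hdom _ _ rfl (Finset.Subset.refl _)
  have hc2 := stage2 hdom _ _ rfl (Finset.Subset.refl _)
  rw [← h1] at hc1
  rw [← h2] at hc2
  exact hc1.trans hc2

lemma partB {K L : Cplx V} (h : StrongCollapses K L) :
    PosetStrongCollapses K.faces L.faces := by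
  induction h with
  | refl => exact Relation.ReflTransGen.refl
  | tail _ hbc ih => exact ih.trans (partB_elem hbc)

end PartB

/-- (a) a strong collapse of finite posets induces a strong collapse
of order complexes; (b) a strong collapse of complexes induces a strong collapse
of face posets. -/
theorem stmt10 {P V : Type} [PartialOrder P] :
    (∀ X Y : Finset P, PosetStrongCollapses X Y →
      StrongCollapses (orderCplx X) (orderCplx Y)) ∧
    (∀ K L : Cplx V, StrongCollapses K L →
      PosetStrongCollapses K.faces L.faces) :=
  ⟨fun _ _ h => partA h, fun _ _ h => partB h⟩

end StrongHomotopy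
end
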